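/- arXiv:1007.3609 — 4 statements merged into one kernel-verified Lean document; each statement's English description precedes it below -/
import Mathlib

section
/- Let c, c' > 0 be fixed real constants. There exist a constant d > 0 and a threshold r₀ > 0 such that for every real r ≥ r₀ the following holds. Let B : ℝ → ℝ be any function such that B(x) = 0 for all x ≤ r, and such that for every n > r there exist reals α₁, α₂, α₃ ≥ 0 with α₁ + α₂ + α₃ = 1, 1/3 ≤ α₁ ≤ 2/3, and α₃ ≤ α₂, satisfying B(n) ≤ c·√n + B(α₁·n + c'·√n) + B(α₂·n + c'·√n) + B(α₃·n + c'·√n). Then B(n) ≤ d·(n/√r − √n/3) for all n ≥ r/9. -/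
/-!
With the potential `Φ(n) = n / √r - √n / 3` one shows `B ≤ 120 c Φ` by induction on the size of
the piece. The linear parts of `Φ` add up across a split (up to the `3 c' √n` overlap, which is
negligible once `√r ≥ 360 c'`), while the square-root parts gain: the two large subpieces satisfy
`√(α₁ n) + √(α₂ n) ≥ (21/20) √n`. This gain of `√n / 60` per unit of `d` pays for the `c √n` new
boundary vertices when `d = 120 c`.
-/

open Real

theorem Real.forall_of_le_mul_induction {P : ℝ → Prop} {r q : ℝ} (hr : 0 < r) (hq₀ : 0 ≤ q)
    (hq₁ : q < 1) (base : ∀ n ≤ r, P n) (step : ∀ n > r, (∀ m ≤ q * n, P m) → P n) (n : ℝ) :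
    P n := by
  have scaled : ∀ k : ℕ, ∀ n, q ^ k * n ≤ r → P n := by
    intro k
    induction k with
    | zero => exact fun n hn => base n (by simpa using hn)
    | succ k ih =>
      intro n hn
      rcases le_or_gt n r with hnr | hnr
      · exact base n hnr
      refine step n hnr fun m hm => ih m ?_
      calc q ^ k * m ≤ q ^ k * (q * n) := mul_le_mul_of_nonneg_left hm (pow_nonneg hq₀ k)
        _ = q ^ (k + 1) * n := by ring
        _ ≤ r := hn
  rcases le_or_gt n r with hnr | hnr
  · exact base n hnr
  have hn : 0 < n := hr.trans hnr
  obtain ⟨k, hk⟩ := exists_pow_lt_of_lt_one (div_pos hr hn) hq₁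
  exact scaled k n ((lt_div_iff₀ hn).1 hk).le

theorem twenty_one_div_twenty_le_sqrt_add_sqrt {a b : ℝ} (ha : 1 / 3 ≤ a) (hb : 1 / 6 ≤ b)
    (hab : 2 / 3 ≤ a + b) : 21 / 20 ≤ √a + √b := by
  have hu := sq_sqrt (show 0 ≤ a by linarith)
  have hv := sq_sqrt (show 0 ≤ b by linarith)
  have huv : 4 / 17 ≤ √a * √b := by
    nlinarith [mul_nonneg (sqrt_nonneg a) (sqrt_nonneg b)]
  nlinarith [sqrt_nonneg a, sqrt_nonneg b]

noncomputable def boundaryPotential (r n : ℝ) : ℝ := n / √r - √n / 3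

theorem boundaryPotential_nonneg {r n : ℝ} (hr : 0 < r) (hn : r / 9 ≤ n) :
    0 ≤ boundaryPotential r n := by
  have hsn : √n * √n = n := mul_self_sqrt (by linarith)
  have hrn : √r ≤ 3 * √n := by
    calc √r ≤ √(3 ^ 2 * n) := sqrt_le_sqrt (by linarith)
      _ = 3 * √n := by rw [sqrt_mul (by norm_num), sqrt_sq (by norm_num)]
  have : √n / 3 ≤ n / √r := by
    rw [div_le_div_iff₀ (by norm_num) (sqrt_pos.2 hr)]
    nlinarith [mul_le_mul_of_nonneg_left hrn (sqrt_nonneg n)]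
  exact sub_nonneg.2 this

theorem boundaryPotential_le_div_sqrt (r n : ℝ) : boundaryPotential r n ≤ n / √r :=
  sub_le_self _ (by positivity)

theorem sqrt_add_boundaryPotential_split_le {c' r n α₁ α₂ α₃ : ℝ} (hc' : 0 ≤ c') (hr : 0 < r) (hcr : 360 * c' ≤ √r)
    (h₁ : 0 ≤ α₁) (h₂ : 0 ≤ α₂) (hsum : α₁ + α₂ + α₃ = 1) (hα₁ : 1 / 3 ≤ α₁)
    (hα₁' : α₁ ≤ 2 / 3) (hα₃ : α₃ ≤ α₂) :
    √n + 120 * (boundaryPotential r (α₁ * n + c' * √n) + boundaryPotential r (α₂ * n + c' * √n)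
      + (α₃ * n + c' * √n) / √r) ≤ 120 * boundaryPotential r n := by
  unfold boundaryPotential
  set s := √n
  have hs : 0 ≤ s := sqrt_nonneg n
  have hsqrt_piece : ∀ α, 0 ≤ α → √α * s ≤ √(α * n + c' * s) := fun α hα => by
    rw [← sqrt_mul hα]
    exact sqrt_le_sqrt (by nlinarith)
  have hgain : 21 / 20 * s ≤ √(α₁ * n + c' * s) + √(α₂ * n + c' * s) := by
    have := twenty_one_div_twenty_le_sqrt_add_sqrt (b := α₂) hα₁ (by linarith) (by linarith)
    nlinarith [hsqrt_piece α₁ h₁, hsqrt_piece α₂ h₂]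
  have hlinear : (α₁ * n + c' * s) / √r + (α₂ * n + c' * s) / √r + (α₃ * n + c' * s) / √r
      = n / √r + 3 * (c' * s) / √r := by
    rw [← add_div, ← add_div, ← add_div]
    congr 1
    linear_combination n * hsum
  have hoverlap : 3 * (c' * s) / √r ≤ s / 120 := by
    rw [div_le_div_iff₀ (sqrt_pos.2 hr) (by norm_num)]
    nlinarith
  linarith

theorem le_boundaryPotential_of_split {B : ℝ → ℝ} {c c' r n α₁ α₂ α₃ : ℝ} (hc : 0 ≤ c)
    (hc' : 0 ≤ c') (hr : 0 < r) (hcr : 360 * c' ≤ √r) (hB : ∀ x ≤ r, B x = 0) (hn : r < n)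
    (h₁ : 0 ≤ α₁) (h₂ : 0 ≤ α₂) (h₃ : 0 ≤ α₃) (hsum : α₁ + α₂ + α₃ = 1) (hα₁ : 1 / 3 ≤ α₁)
    (hα₁' : α₁ ≤ 2 / 3) (hα₃ : α₃ ≤ α₂)
    (hrec : B n ≤ c * √n + B (α₁ * n + c' * √n) + B (α₂ * n + c' * √n) + B (α₃ * n + c' * √n))
    (ih : ∀ m ≤ 5 / 6 * n, r / 9 ≤ m → B m ≤ 120 * c * boundaryPotential r m) :
    B n ≤ 120 * c * boundaryPotential r n := by
  have hs : 0 ≤ √n := sqrt_nonneg n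
  have hoverlap : c' * √n ≤ n / 6 := by
    have : 6 * c' ≤ √n := by linarith [sqrt_le_sqrt hn.le]
    nlinarith [mul_self_sqrt (show 0 ≤ n by linarith)]
  have hpiece : ∀ α, α ≤ 2 / 3 → α * n + c' * √n ≤ 5 / 6 * n := fun α hα => by nlinarith
  have hB₁ := ih _ (hpiece α₁ hα₁') (by nlinarith)
  have hB₂ := ih _ (hpiece α₂ (by linarith)) (by nlinarith)
  have hB₃ : B (α₃ * n + c' * √n) ≤ 120 * c * ((α₃ * n + c' * √n) / √r) := by
    rcases le_or_gt (α₃ * n + c' * √n) r with hsmall | hlarge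
    · rw [hB _ hsmall]
      have : 0 ≤ α₃ * n + c' * √n := by nlinarith
      positivity
    · exact (ih _ (hpiece α₃ (by linarith)) (by linarith)).trans
        (mul_le_mul_of_nonneg_left (boundaryPotential_le_div_sqrt _ _) (by positivity))
  calc B n ≤ c * (√n + 120 * (boundaryPotential r (α₁ * n + c' * √n)
        + boundaryPotential r (α₂ * n + c' * √n) + (α₃ * n + c' * √n) / √r)) := by
        linarith
    _ ≤ c * (120 * boundaryPotential r n) := mul_le_mul_of_nonneg_left
        (sqrt_add_boundaryPotential_split_le hc' hr hcr h₁ h₂ hsum hα₁ hα₁' hα₃) hc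
    _ = 120 * c * boundaryPotential r n := by ring

theorem weak_r_division_boundary_recurrence
    (c c' : ℝ) (hc : 0 < c) (hc' : 0 < c') :
    ∃ d > (0:ℝ), ∃ r₀ > (0:ℝ), ∀ r ≥ r₀, ∀ B : ℝ → ℝ,
      (∀ x ≤ r, B x = 0) →
      (∀ n > r, ∃ α₁ α₂ α₃ : ℝ, 0 ≤ α₁ ∧ 0 ≤ α₂ ∧ 0 ≤ α₃ ∧
        α₁ + α₂ + α₃ = 1 ∧ 1/3 ≤ α₁ ∧ α₁ ≤ 2/3 ∧ α₃ ≤ α₂ ∧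
        B n ≤ c * Real.sqrt n + B (α₁ * n + c' * Real.sqrt n) +
              B (α₂ * n + c' * Real.sqrt n) + B (α₃ * n + c' * Real.sqrt n)) →
      ∀ n ≥ r / 9, B n ≤ d * (n / Real.sqrt r - Real.sqrt n / 3) := by
  refine ⟨120 * c, by positivity, (360 * c') ^ 2, by positivity, ?_⟩
  intro r hr B hB hrec n
  have hr₀ : 0 < r := lt_of_lt_of_le (by positivity) hr
  have hcr : 360 * c' ≤ √r := by
    simpa [sqrt_sq (by positivity : 0 ≤ 360 * c')] using sqrt_le_sqrt hr
  refine Real.forall_of_le_mul_induction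
    (P := fun n => n ≥ r / 9 → B n ≤ 120 * c * boundaryPotential r n) (q := 5 / 6)
    hr₀ (by norm_num) (by norm_num) ?_ ?_ n
  · intro n hn hn₉
    rw [hB n hn]
    exact mul_nonneg (by positivity) (boundaryPotential_nonneg hr₀ hn₉)
  · intro n hn ih _
    obtain ⟨α₁, α₂, α₃, h₁, h₂, h₃, hsum, hα₁, hα₁', hα₃, hrecn⟩ := hrec n hn
    exact le_boundaryPotential_of_split hc.le hc'.le hr₀ hcr hB hn h₁ h₂ h₃ hsum hα₁ hα₁' hα₃
      hrecn ih
end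

section
/- Let c, c' > 0 be fixed real constants. There exist a constant d > 0 and a threshold r₀ > 0 such that for every real r ≥ r₀ the following holds. Let B : ℝ → ℝ be any function such that B(x) = 0 for all x ≤ r, and such that for every n > r there exist reals α₁, α₂, α₃ ≥ 0 with α₁ + α₂ + α₃ = 1, 1/3 ≤ α₁ ≤ 2/3, and α₃ ≤ α₂, satisfying B(n) ≤ c·√n + B(α₁·n + c'·√n) + B(α₂·n + c'·√n) + B(α₃·n + c'·√n). Then B(n) ≤ d·n/√r for all n ≥ 0. -/
open Real

lemma weak_r_div_amgm_aux (c t u : ℝ) (hc : 0 < c) (ht : 0 ≤ t) (hu : 0 ≤ u) :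
    0 ≤ 600*c*(t*t) - 10*c*t*u + c/6*(u*u) := by
  nlinarith [mul_nonneg hc.le (sq_nonneg (60*t - u)),
    mul_nonneg (mul_nonneg hc.le ht) hu]

lemma weak_r_div_sqrt_lb_aux (α : ℝ) (h0 : 0 ≤ α) (h2 : α ≤ 2/3) :
    6/5*α ≤ Real.sqrt α := by
  have hw0 := Real.sqrt_nonneg α
  have hw2 : Real.sqrt α * Real.sqrt α = α := Real.mul_self_sqrt h0
  have hwle : Real.sqrt α ≤ 5/6 := by nlinarith
  nlinarith [mul_nonneg hw0 (sub_nonneg.2 hwle)]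

theorem weak_r_division_boundary_bound
    (c c' : ℝ) (hc : 0 < c) (hc' : 0 < c') :
    ∃ d > (0:ℝ), ∃ r₀ > (0:ℝ), ∀ r ≥ r₀, ∀ B : ℝ → ℝ,
      (∀ x ≤ r, B x = 0) →
      (∀ n > r, ∃ α₁ α₂ α₃ : ℝ, 0 ≤ α₁ ∧ 0 ≤ α₂ ∧ 0 ≤ α₃ ∧
        α₁ + α₂ + α₃ = 1 ∧ 1/3 ≤ α₁ ∧ α₁ ≤ 2/3 ∧ α₃ ≤ α₂ ∧
        B n ≤ c * Real.sqrt n + B (α₁ * n + c' * Real.sqrt n) +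
              B (α₂ * n + c' * Real.sqrt n) + B (α₃ * n + c' * Real.sqrt n)) →
      ∀ n ≥ (0:ℝ), B n ≤ d * n / Real.sqrt r := by
  refine ⟨600*c, by positivity, max 12 ((3600*c')^2),
    lt_of_lt_of_le (by norm_num) (le_max_left _ _), ?_⟩
  intro r hr B hB0 hrec
  have hr12 : (12:ℝ) ≤ r := le_trans (le_max_left _ _) hr
  have hr0 : (0:ℝ) ≤ r := by linarith
  set u := Real.sqrt r with hu_def
  have hu0 : 0 < u := Real.sqrt_pos.2 (by linarith)
  have hu2 : u * u = r := Real.mul_self_sqrt hr0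
  have hrc' : 3600*c' ≤ u := by
    have h1 : (3600*c')^2 ≤ r := le_trans (le_max_right _ _) hr
    have h2 := Real.sqrt_le_sqrt h1
    rwa [Real.sqrt_sq (by positivity)] at h2
  have key : ∀ k : ℕ, ∀ m : ℝ, m ≤ r + k →
      B m * u ≤ max 0 (600*c*m - 10*c*Real.sqrt m * u) := by
    intro k
    induction k with
    | zero =>
      intro m hm
      rw [hB0 m (by simpa using hm), zero_mul]
      exact le_max_left _ _
    | succ k ih =>
      intro m hm
      by_cases hmr : m ≤ r
      · rw [hB0 m hmr, zero_mul]; exact le_max_left _ _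
      push_neg at hmr
      obtain ⟨α₁, α₂, α₃, h1, h2, h3, hsum, h13, h23, h32, hB⟩ := hrec m hmr
      set s := Real.sqrt m with hs_def
      have hm0 : (0:ℝ) ≤ m := by linarith
      have hm12 : (12:ℝ) ≤ m := by linarith
      have hs0 : (0:ℝ) ≤ s := Real.sqrt_nonneg m
      have hs2 : s * s = m := Real.mul_self_sqrt hm0
      have hus : u ≤ s := Real.sqrt_le_sqrt hmr.le
      have hmk : m ≤ r + (k+1) := by
        have h := hm; push_cast at h ⊢; linarith
      have hcs : c' * s ≤ m / 3600 := by
        have f1 := mul_le_mul_of_nonneg_right hrc' hs0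
        have f2 := mul_le_mul_of_nonneg_right hus hs0
        linarith
      -- bound for each subpiece
      have piece : ∀ α : ℝ, 0 ≤ α → α ≤ 2/3 →
          B (α*m + c'*s) * u ≤ 600*c*(α*m + c'*s) - 12*c*α*s*u + c/6*(u*u) := by
        intro α hα0 hα2
        have hm'0 : (0:ℝ) ≤ α*m + c'*s :=
          add_nonneg (mul_nonneg hα0 hm0) (mul_nonneg hc'.le hs0)
        have hm'le : α*m + c'*s ≤ r + k := by
          have hαm : α*m ≤ 2/3*m := mul_le_mul_of_nonneg_right hα2 hm0
          push_cast
          linarith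
        have hih := ih (α*m + c'*s) hm'le
        set t := Real.sqrt (α*m + c'*s) with ht_def
        have ht0 : (0:ℝ) ≤ t := Real.sqrt_nonneg _
        have ht2 : t * t = α*m + c'*s := Real.mul_self_sqrt hm'0
        have hamgm := weak_r_div_amgm_aux c t u hc ht0 hu0.le
        rw [ht2] at hamgm
        have hslack : max 0 (600*c*(α*m + c'*s) - 10*c*t*u) ≤
            600*c*(α*m + c'*s) - 10*c*t*u + c/6*(u*u) := by
          apply max_le
          · linarith
          · have : (0:ℝ) ≤ c/6*(u*u) := by positivity
            linarith
        have hta : Real.sqrt α * s ≤ t := by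
          have h' : α * m ≤ α*m + c'*s := by
            have := mul_nonneg hc'.le hs0; linarith
          have h'' := Real.sqrt_le_sqrt h'
          rwa [Real.sqrt_mul hα0] at h''
        have hsa := weak_r_div_sqrt_lb_aux α hα0 hα2
        have ht : 6/5*α*s ≤ t := by
          have := mul_le_mul_of_nonneg_right hsa hs0
          linarith
        have htu : 12*c*α*s*u ≤ 10*c*t*u := by
          have := mul_le_mul_of_nonneg_right ht
            (mul_nonneg (by linarith : (0:ℝ) ≤ 10*c) hu0.le)
          linarith
        calc B (α*m + c'*s) * u ≤ max 0 (600*c*(α*m + c'*s) - 10*c*t*u) := hih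
          _ ≤ 600*c*(α*m + c'*s) - 10*c*t*u + c/6*(u*u) := hslack
          _ ≤ 600*c*(α*m + c'*s) - 12*c*α*s*u + c/6*(u*u) := by linarith
      have p1 := piece α₁ h1 h23
      have p2 := piece α₂ h2 (by linarith)
      have p3 := piece α₃ h3 (by linarith)
      have hBu := mul_le_mul_of_nonneg_right hB hu0.le
      refine le_trans ?_ (le_max_right 0 _)
      have hsm : 600*c*(α₁*m) + 600*c*(α₂*m) + 600*c*(α₃*m) = 600*c*m := by
        linear_combination 600*c*m*hsum
      have hssu : 12*c*α₁*s*u + 12*c*α₂*s*u + 12*c*α₃*s*u = 12*c*s*u := by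
        linear_combination 12*c*s*u*hsum
      have hsu1 : 1800*c*c'*s ≤ c/2*s*u := by
        have := mul_le_mul_of_nonneg_left hrc'
          (by positivity : (0:ℝ) ≤ c/2*s)
        linarith
      have hsu2 : c/2*(u*u) ≤ c/2*s*u := by
        have := mul_le_mul_of_nonneg_left hus
          (by positivity : (0:ℝ) ≤ c/2*u)
        linarith
      linarith [hBu, p1, p2, p3]
  intro n hn
  obtain ⟨k, hk⟩ := exists_nat_ge n
  have hkey := key k n (by linarith)
  have hmax : max 0 (600*c*n - 10*c*Real.sqrt n * u) ≤ 600*c*n := by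
    apply max_le (by positivity)
    have : (0:ℝ) ≤ 10*c*Real.sqrt n*u :=
      mul_nonneg (mul_nonneg (by linarith) (Real.sqrt_nonneg n)) hu0.le
    linarith
  exact (le_div_iff₀ hu0).mpr (hkey.trans hmax)
end

section
/- Let n, r, c, c', d > 0 be reals and let α₁, α₂, α₃ ≥ 0 be reals with α₁ + α₂ + α₃ = 1. If 1 + 3c/d + 9c'/√r ≤ √α₁ + √α₂ + √α₃, then c·√n + d·n/√r + 3·d·c'·√n/√r − (d/3)·(√(α₁·n + c'·√n) + √(α₂·n + c'·√n) + √(α₃·n + c'·√n)) ≤ d·(n/√r − √n/3). -/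
open Real

theorem induction_step_case_one
    (n r c c' d : ℝ) (hn : 0 < n) (hr : 0 < r) (hc : 0 < c) (hc' : 0 < c')
    (hd : 0 < d)
    (α₁ α₂ α₃ : ℝ) (h₁ : 0 ≤ α₁) (h₂ : 0 ≤ α₂) (h₃ : 0 ≤ α₃)
    (hsum : α₁ + α₂ + α₃ = 1)
    (hineq : 1 + 3 * c / d + 9 * c' / Real.sqrt r ≤
      Real.sqrt α₁ + Real.sqrt α₂ + Real.sqrt α₃) :
    c * Real.sqrt n + d * n / Real.sqrt r + 3 * d * c' * Real.sqrt n / Real.sqrt r -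
      (d / 3) * (Real.sqrt (α₁ * n + c' * Real.sqrt n) +
                 Real.sqrt (α₂ * n + c' * Real.sqrt n) +
                 Real.sqrt (α₃ * n + c' * Real.sqrt n)) ≤
    d * (n / Real.sqrt r - Real.sqrt n / 3) := by
  have hsn : 0 < Real.sqrt n := Real.sqrt_pos.mpr hn
  have hsr : 0 < Real.sqrt r := Real.sqrt_pos.mpr hr
  have key : ∀ α : ℝ, 0 ≤ α →
      Real.sqrt α * Real.sqrt n ≤ Real.sqrt (α * n + c' * Real.sqrt n) := by
    intro α hα
    rw [← Real.sqrt_mul hα]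
    exact Real.sqrt_le_sqrt (by nlinarith)
  have k1 := key α₁ h₁
  have k2 := key α₂ h₂
  have k3 := key α₃ h₃
  have hmul : (1 + 3 * c / d + 9 * c' / Real.sqrt r) * Real.sqrt n ≤
      (Real.sqrt α₁ + Real.sqrt α₂ + Real.sqrt α₃) * Real.sqrt n :=
    mul_le_mul_of_nonneg_right hineq hsn.le
  have hd3 : (0:ℝ) ≤ d / 3 := by positivity
  have H := mul_le_mul_of_nonneg_left hmul hd3
  have m1 := mul_le_mul_of_nonneg_left k1 hd3
  have m2 := mul_le_mul_of_nonneg_left k2 hd3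
  have m3 := mul_le_mul_of_nonneg_left k3 hd3
  have expand : (d / 3) * ((1 + 3 * c / d + 9 * c' / Real.sqrt r) * Real.sqrt n)
      = d * Real.sqrt n / 3 + c * Real.sqrt n + 3 * d * c' * Real.sqrt n / Real.sqrt r := by
    field_simp
    ring
  rw [expand] at H
  ring_nf at H m1 m2 m3 ⊢
  linarith [H, m1, m2, m3]
end

section
/- Let n, r, c, c', d > 0 be reals and let α₁, α₂ ≥ 0 be reals. If 1 + 3c/d + 6c'/√r ≤ √α₁ + √α₂, then c·√n + d·n/√r + 2·d·c'·√n/√r − (d/3)·(√(α₁·n + c'·√n) + √(α₂·n + c'·√n)) ≤ d·(n/√r − √n/3). -/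
open Real

theorem induction_step_case_two
    (n r c c' d : ℝ) (hn : 0 < n) (hr : 0 < r) (hc : 0 < c) (hc' : 0 < c')
    (hd : 0 < d)
    (α₁ α₂ : ℝ) (h₁ : 0 ≤ α₁) (h₂ : 0 ≤ α₂)
    (hineq : 1 + 3 * c / d + 6 * c' / Real.sqrt r ≤
      Real.sqrt α₁ + Real.sqrt α₂) :
    c * Real.sqrt n + d * n / Real.sqrt r + 2 * d * c' * Real.sqrt n / Real.sqrt r -
      (d / 3) * (Real.sqrt (α₁ * n + c' * Real.sqrt n) +
                 Real.sqrt (α₂ * n + c' * Real.sqrt n)) ≤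
    d * (n / Real.sqrt r - Real.sqrt n / 3) := by
  have hs : 0 < Real.sqrt n := Real.sqrt_pos.mpr hn
  have hsr : 0 < Real.sqrt r := Real.sqrt_pos.mpr hr
  have k1 : Real.sqrt α₁ * Real.sqrt n ≤ Real.sqrt (α₁ * n + c' * Real.sqrt n) := by
    rw [← Real.sqrt_mul h₁]
    exact Real.sqrt_le_sqrt (by nlinarith [hs.le])
  have k2 : Real.sqrt α₂ * Real.sqrt n ≤ Real.sqrt (α₂ * n + c' * Real.sqrt n) := by
    rw [← Real.sqrt_mul h₂]
    exact Real.sqrt_le_sqrt (by nlinarith [hs.le])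
  have h' : d * Real.sqrt r + 3 * c * Real.sqrt r + 6 * c' * d ≤
      d * Real.sqrt r * (Real.sqrt α₁ + Real.sqrt α₂) := by
    have := mul_le_mul_of_nonneg_left hineq (by positivity : (0:ℝ) ≤ d * Real.sqrt r)
    field_simp at this
    nlinarith [this]
  rw [← sub_nonneg]
  have expand : d * (n / Real.sqrt r - Real.sqrt n / 3) -
      (c * Real.sqrt n + d * n / Real.sqrt r + 2 * d * c' * Real.sqrt n / Real.sqrt r -
      (d / 3) * (Real.sqrt (α₁ * n + c' * Real.sqrt n) +
                 Real.sqrt (α₂ * n + c' * Real.sqrt n))) =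
      ((d / 3) * (Real.sqrt (α₁ * n + c' * Real.sqrt n) +
                 Real.sqrt (α₂ * n + c' * Real.sqrt n))
       - c * Real.sqrt n - d * Real.sqrt n / 3
       - 2 * d * c' * Real.sqrt n / Real.sqrt r) := by ring
  rw [expand]
  rw [sub_nonneg, div_le_iff₀ hsr]
  nlinarith [mul_le_mul_of_nonneg_right h' hs.le, mul_pos hd hs,
    mul_le_mul_of_nonneg_left k1 (mul_pos hd hsr).le,
    mul_le_mul_of_nonneg_left k2 (mul_pos hd hsr).le]
end
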